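/- In the computation of local-esh(⊠,T), each Phase 1 move takes ⊠ to a square in a strictly lower row and weakly more-left column, and the squares occupied by ⊠ during Phase 1 form a vertical strip (no two in the same row); each Phase 2 move takes ⊠ to a square in a weakly higher row and strictly more-right column, and the squares occupied by ⊠ during Phase 2 form a horizontal strip (no two in the same column). -/

import Mathlib

/-
Common combinatorial framework for the paper
"Monodromy and K-theory of Schubert curves via generalized jeu de taquin"
(Gillespie–Levinson).

Cells are pairs (row, column), 0-indexed, with row 0 the top row (English
convention).  A skew tableau is modelled as a `Filling`, i.e. a function
`Cell → Option ℕ`; `none` means the cell is not in the (filled part of the)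
shape.  A punctured tableau is a filling together with a distinguished empty
cell `box` (the ⊠).
-/

namespace SC

/-- A cell `(row, column)` of the plane; row `0` is the top row. -/
abbrev Cell : Type := ℕ × ℕ

/-- A partial filling of the cells by natural-number entries. -/
abbrev Filling : Type := Cell → Option ℕ

/-- `readBefore p q` : the cell `p` comes strictly before `q` in reading order
(rows bottom to top, left to right within each row). -/
def readBefore (p q : Cell) : Prop :=
  q.1 < p.1 ∨ (p.1 = q.1 ∧ p.2 < q.2)

/-- Two cells share an edge. -/
def Adj (p q : Cell) : Prop :=
  (p.1 = q.1 ∧ (p.2 + 1 = q.2 ∨ q.2 + 1 = p.2)) ∨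
    (p.2 = q.2 ∧ (p.1 + 1 = q.1 ∨ q.1 + 1 = p.1))

/-- A partition contained in the `k × m` rectangle (parts indexed from `0`). -/
structure Partition (k m : ℕ) where
  part : ℕ → ℕ
  antitone' : ∀ ⦃i j : ℕ⦄, i ≤ j → part j ≤ part i
  le_width : ∀ i, part i ≤ m
  eq_zero : ∀ i, k ≤ i → part i = 0

/-- The size `|λ|` of a partition. -/
def Partition.size {k m : ℕ} (l : Partition k m) : ℕ :=
  ∑ i ∈ Finset.range k, l.part i

/-- The number `ℓ(λ)` of nonzero parts. -/
def Partition.length {k m : ℕ} (l : Partition k m) : ℕ :=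
  ((Finset.range k).filter fun i => l.part i ≠ 0).card

/-- The skew shape `γᶜ/α` inside the `k × m` rectangle: row `i` of `γᶜ` has
length `m - γ (k-1-i)`. -/
def totalShape (k m : ℕ) (a g : Partition k m) : Set Cell :=
  {p | p.1 < k ∧ a.part p.1 ≤ p.2 ∧ p.2 < m - g.part (k - 1 - p.1)}

/-- The set of filled cells of a filling. -/
def shapeOf (T : Filling) : Set Cell := {p | T p ≠ none}

/-- Rows are weakly increasing (on filled cells). -/
def RowsWeak (T : Filling) : Prop :=
  ∀ r c₁ c₂ v₁ v₂, c₁ ≤ c₂ → T (r, c₁) = some v₁ → T (r, c₂) = some v₂ → v₁ ≤ v₂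

/-- Columns are strictly increasing (on filled cells). -/
def ColsStrict (T : Filling) : Prop :=
  ∀ r₁ r₂ c v₁ v₂, r₁ < r₂ → T (r₁, c) = some v₁ → T (r₂, c) = some v₂ → v₁ < v₂

/-- All entries are at least `1`. -/
def PosEntries (T : Filling) : Prop := ∀ p v, T p = some v → 1 ≤ v

open scoped Classical in
/-- The number of cells of the `k × m` rectangle satisfying `P` and carrying
the entry `v`. -/
noncomputable def countP (k m : ℕ) (T : Filling) (P : Cell → Prop) (v : ℕ) : ℕ :=
  ((Finset.range k ×ˢ Finset.range m).filter fun p => P p ∧ T p = some v).card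

/-- The reading word is ballot: every weak suffix contains, for each `i ≥ 1`,
at least as many `i`'s as `(i+1)`'s. -/
def Ballot (k m : ℕ) (T : Filling) : Prop :=
  ∀ (p : Cell) (i : ℕ), 1 ≤ i →
    countP k m T (fun q => q = p ∨ readBefore p q) (i + 1) ≤
      countP k m T (fun q => q = p ∨ readBefore p q) i

/-- The filling has content `β`: the entry `j+1` occurs exactly `β j` times. -/
def HasContent (k m : ℕ) (b : Partition k m) (T : Filling) : Prop :=
  ∀ j : ℕ, countP k m T (fun _ => True) (j + 1) = b.part j

/-- A punctured tableau: a filling together with a distinguished empty cell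
(the `⊠`). -/
structure PState where
  box : Cell
  T : Filling

/-- Membership in `LR(α, □, β, γ)`: `T` is a Littlewood–Richardson skew tableau
of content `β`, `⊠` is an inner co-corner of `T`, and `⊠ ⊔ T` has shape `γᶜ/α`.
(The conditions on `(box.1, box.2 - 1)` and `(box.1 - 1, box.2)` say that the
west and north neighbours of the box are not in the shape; note that if
`box.2 = 0` resp. `box.1 = 0` the displayed cell is the box itself, which is
empty, so the condition is automatic, as it should be.) -/
def MemLR1 (k m : ℕ) (a b g : Partition k m) (x : PState) : Prop :=
  x.box ∈ totalShape k m a g ∧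
  (∀ p : Cell, (x.T p).isSome ↔ (p ∈ totalShape k m a g ∧ p ≠ x.box)) ∧
  RowsWeak x.T ∧ ColsStrict x.T ∧ PosEntries x.T ∧
  Ballot k m x.T ∧ HasContent k m b x.T ∧
  (x.box.1, x.box.2 - 1) ∉ shapeOf x.T ∧ (x.box.1 - 1, x.box.2) ∉ shapeOf x.T

/-- Membership in `LR(α, β, □, γ)`: as in `MemLR1` but the box `⊠` extends `T`
outward (its east and south neighbours are not in the shape). -/
def MemLR2 (k m : ℕ) (a b g : Partition k m) (x : PState) : Prop :=
  x.box ∈ totalShape k m a g ∧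
  (∀ p : Cell, (x.T p).isSome ↔ (p ∈ totalShape k m a g ∧ p ≠ x.box)) ∧
  RowsWeak x.T ∧ ColsStrict x.T ∧ PosEntries x.T ∧
  Ballot k m x.T ∧ HasContent k m b x.T ∧
  (x.box.1, x.box.2 + 1) ∉ shapeOf x.T ∧ (x.box.1 + 1, x.box.2) ∉ shapeOf x.T

/-- Exchange the box with the cell `q`, which receives the box while the old
box cell receives the entry `v`. -/
def swapState (x : PState) (q : Cell) (v : ℕ) : PState :=
  ⟨q, Function.update (Function.update x.T q none) x.box (some v)⟩

/-! ### The local evacuation-shuffle -/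

/-- Phase 1 applies at value `i` iff the box does not precede all of the `i`'s
in reading order. -/
def phase1Cond (i : ℕ) (x : PState) : Prop :=
  ∃ q, x.T q = some i ∧ readBefore q x.box

/-- `q` is the nearest `i` strictly prior to the box in reading order. -/
def Phase1Move (i : ℕ) (x : PState) (q : Cell) : Prop :=
  x.T q = some i ∧ readBefore q x.box ∧
    ∀ q', x.T q' = some i → readBefore q' x.box → q' = q ∨ readBefore q' q

/-- Phase 2 continues at value `i` iff the suffix of the reading word strictly
after the box contains strictly more `i`'s than `(i+1)`'s. -/
def phase2Cond (k m i : ℕ) (x : PState) : Prop :=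
  countP k m x.T (fun q => readBefore x.box q) (i + 1) <
    countP k m x.T (fun q => readBefore x.box q) i

/-- `q` is the nearest `i` strictly after the box in reading order. -/
def Phase2Move (i : ℕ) (x : PState) (q : Cell) : Prop :=
  x.T q = some i ∧ readBefore x.box q ∧
    ∀ q', x.T q' = some i → readBefore x.box q' → q' = q ∨ readBefore q q'

/-- One step of the local evacuation-shuffle algorithm, on states
`(i, phase, x)` where `phase = false` is Phase 1 and `phase = true` is
Phase 2, and `lb = ℓ(β)`.  The algorithm starts at `(1, false, x)` and is
stuck exactly at the states with `i = lb + 1`. -/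
inductive Step (k m lb : ℕ) : ℕ × Bool × PState → ℕ × Bool × PState → Prop
  | p1 {i : ℕ} {x : PState} {q : Cell} (hi : i ≤ lb) (h : Phase1Move i x q) :
      Step k m lb (i, false, x) (i + 1, false, swapState x q i)
  | p1to2 {i : ℕ} {x : PState} (hi : i ≤ lb) (h : ¬ phase1Cond i x) :
      Step k m lb (i, false, x) (i, true, x)
  | p2 {i : ℕ} {x : PState} {q : Cell} (hi : i ≤ lb) (hc : phase2Cond k m i x)
      (h : Phase2Move i x q) :
      Step k m lb (i, true, x) (i, true, swapState x q i)
  | p2inc {i : ℕ} {x : PState} (hi : i ≤ lb) (hc : ¬ phase2Cond k m i x) :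
      Step k m lb (i, true, x) (i + 1, true, x)

/-- The complete run of the local evacuation-shuffle:
`local-esh (x) = y`. -/
def LocalEshRun (k m lb : ℕ) (x y : PState) : Prop :=
  ∃ bl : Bool, Relation.ReflTransGen (Step k m lb) (1, false, x) (lb + 1, bl, y)

/-! ### Jeu de taquin slides -/

/-- One step of an inward jeu de taquin slide: the empty box moves north or
west, the displaced entry moves south-east into the old box.  Ties between the
north and west entries are broken by moving the north entry. -/
inductive InStep : PState → PState → Prop
  | north {x : PState} {r c v : ℕ} (hb : x.box = (r + 1, c)) (hv : x.T (r, c) = some v)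
      (hw : ∀ w, x.T (r + 1, c - 1) = some w → w ≤ v) :
      InStep x (swapState x (r, c) v)
  | west {x : PState} {r c v : ℕ} (hb : x.box = (r, c + 1)) (hv : x.T (r, c) = some v)
      (hn : ∀ w, x.T (r - 1, c + 1) = some w → w < v) :
      InStep x (swapState x (r, c) v)

/-- One step of an outward jeu de taquin slide: the empty box moves south or
east, the displaced entry moves north-west into the old box.  Ties between the
south and east entries are broken by moving the south entry. -/
inductive OutStep : PState → PState → Prop
  | south {x : PState} {r c v : ℕ} (hb : x.box = (r, c)) (hv : x.T (r + 1, c) = some v)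
      (he : ∀ w, x.T (r, c + 1) = some w → v ≤ w) :
      OutStep x (swapState x (r + 1, c) v)
  | east {x : PState} {r c v : ℕ} (hb : x.box = (r, c)) (hv : x.T (r, c + 1) = some v)
      (hs : ∀ w, x.T (r + 1, c) = some w → v < w) :
      OutStep x (swapState x (r, c + 1) v)

/-- Run a step relation to completion. -/
def RunToEnd (R : PState → PState → Prop) (x y : PState) : Prop :=
  Relation.ReflTransGen R x y ∧ ∀ z, ¬ R y z

/-- The shuffle `sh : LR(α,β,□,γ) → LR(α,□,β,γ)`: the complete inward jeu de
taquin slide of `T` into the box. -/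
def ShRun (x y : PState) : Prop := RunToEnd InStep x y

/-! ### Rectification, promotion, and the evacuation-shuffle -/

/-- `S` is (the set of cells of) a skew shape `λ/μ`. -/
def IsSkewShape (S : Set Cell) : Prop :=
  ∃ lam mu : ℕ → ℕ,
    (∀ ⦃i j : ℕ⦄, i ≤ j → lam j ≤ lam i) ∧ (∀ ⦃i j : ℕ⦄, i ≤ j → mu j ≤ mu i) ∧
    (∀ i, mu i ≤ lam i) ∧ ∀ p : Cell, p ∈ S ↔ mu p.1 ≤ p.2 ∧ p.2 < lam p.1

/-- `c` is an inner co-corner of the shape `S` (an addable corner of the inner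
partition). -/
def InnerAddable (S : Set Cell) (c : Cell) : Prop :=
  c ∉ S ∧ IsSkewShape (insert c S) ∧ (c.1, c.2 - 1) ∉ S ∧ (c.1 - 1, c.2) ∉ S

/-- One rectification move on a filling `U`: slide the hole inward from an
inner co-corner `c` through `U` until it exits; `d` records the vacated outer
cell and `V` is the resulting filling. -/
def RectMove (U V : Filling) (d : Cell) : Prop :=
  ∃ c : Cell, InnerAddable (shapeOf U) c ∧ RunToEnd OutStep ⟨c, U⟩ ⟨d, V⟩

/-- A sequence of rectification moves, recording the vacated cells. -/
inductive RectSeq : Filling → List Cell → Filling → Prop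
  | nil (U : Filling) : RectSeq U [] U
  | cons {U V W : Filling} {d : Cell} {ds : List Cell} :
      RectMove U V d → RectSeq V ds W → RectSeq U (d :: ds) W

/-- One un-rectification move: slide the hole outward-to-inward starting at the
recorded cell `d` (this is the inverse of the rectification move that vacated
`d`). -/
def UnRectMove (V W : Filling) (d : Cell) : Prop :=
  d ∉ shapeOf V ∧ ∃ c : Cell, RunToEnd InStep ⟨d, V⟩ ⟨c, W⟩

/-- A sequence of un-rectification moves along a list of recorded cells. -/
inductive UnRectSeq : Filling → List Cell → Filling → Prop
  | nil (U : Filling) : UnRectSeq U [] U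
  | cons {U V W : Filling} {d : Cell} {ds : List Cell} :
      UnRectMove U V d → UnRectSeq V ds W → UnRectSeq U (d :: ds) W

/-- `S` is a straight (non-skew) shape. -/
def IsStraight (S : Set Cell) : Prop :=
  ∀ p ∈ S, ∀ q : Cell, q.1 ≤ p.1 → q.2 ≤ p.2 → q ∈ S

/-- Jeu de taquin promotion step on a rectified tableau containing the entry
`0`: delete the `0`, rectify the remainder (one outward slide of the hole),
and label the vacated outer corner with `lb + 1`. -/
def PromMove (lb : ℕ) (R R' : Filling) : Prop :=
  ∃ (p d : Cell) (V : Filling), R p = some 0 ∧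
    RunToEnd OutStep ⟨p, Function.update R p none⟩ ⟨d, V⟩ ∧
    R' = Function.update V d (some (lb + 1))

/-- The evacuation-shuffle `esh : LR(α,□,β,γ) → LR(α,β,□,γ)`: treat `⊠` as the
entry `0`, rectify recording the order, promote (delete the `0`, rectify the
remainder, label the vacated corner `ℓ(β)+1`), un-rectify along the recorded
order reversed, and turn the entry `ℓ(β)+1` back into `⊠`. -/
def EshRel (lb : ℕ) (x y : PState) : Prop :=
  ∃ (ds : List Cell) (R R' W : Filling),
    RectSeq (Function.update x.T x.box (some 0)) ds R ∧
    IsStraight (shapeOf R) ∧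
    PromMove lb R R' ∧
    UnRectSeq R' ds.reverse W ∧
    W y.box = some (lb + 1) ∧ y.T = Function.update W y.box none

/-- The monodromy operator `ω = sh ∘ local-esh` (as a relation). -/
def OmegaRel (k m lb : ℕ) (x y : PState) : Prop :=
  ∃ z : PState, LocalEshRun k m lb x z ∧ ShRun z y

/-! ### Genomic tableaux -/

/-- `(U, {b₁, b₂})` is a ballot genomic tableau of shape `γᶜ/α` and K-theoretic
content `β`, with repeated (extra) entry `i`; here `b₁` comes before `b₂` in
reading order. -/
def IsGenomic (k m : ℕ) (a b g : Partition k m) (i : ℕ)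
    (U : Filling) (b₁ b₂ : Cell) : Prop :=
  1 ≤ i ∧
  (∀ p : Cell, (U p).isSome ↔ p ∈ totalShape k m a g) ∧
  RowsWeak U ∧ ColsStrict U ∧ PosEntries U ∧
  (∀ j : ℕ, countP k m U (fun _ => True) (j + 1)
      = b.part j + if j + 1 = i then 1 else 0) ∧
  readBefore b₁ b₂ ∧ ¬ Adj b₁ b₂ ∧ U b₁ = some i ∧ U b₂ = some i ∧
  (∀ q : Cell, U q = some i → readBefore b₁ q → readBefore q b₂ → False) ∧
  Ballot k m (Function.update U b₁ none) ∧
  Ballot k m (Function.update U b₂ none)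

/-- `K(γᶜ/α; β)(i)`: ballot genomic tableaux with repeated entry `i`. -/
def KSet (k m : ℕ) (a b g : Partition k m) (i : ℕ) : Set (Filling × Cell × Cell) :=
  {u | IsGenomic k m a b g i u.1 u.2.1 u.2.2}

/-- `K(γᶜ/α; β)`: all ballot genomic tableaux of shape `γᶜ/α` and K-theoretic
content `β`. -/
def KAll (k m : ℕ) (a b g : Partition k m) : Set (Filling × Cell × Cell) :=
  ⋃ i : ℕ, KSet k m a b g i

/-! ### Permutation utilities -/

/-- The reflection length of a permutation: the least number of transpositions
whose product is `g`. -/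
noncomputable def rlength {X : Type*} (g : Equiv.Perm X) : ℕ :=
  letI := Classical.decEq X
  sInf {n : ℕ | ∃ l : List (Equiv.Perm X), l.length = n ∧
    (∀ τ ∈ l, ∃ x y : X, x ≠ y ∧ τ = Equiv.swap x y) ∧ l.prod = g}

/-- The set of orbits of a permutation. -/
def orbitsOf {X : Type*} (g : Equiv.Perm X) : Set (Set X) :=
  {s | ∃ a : X, s = {b | g.SameCycle a b}}

/-- The number of orbits of a permutation. -/
noncomputable def orbitCount {X : Type*} (g : Equiv.Perm X) : ℕ :=
  (orbitsOf g).ncard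

/-! ### The sets `Xᵢ` and the factors `ℓᵢ`, `sᵢ` -/

/-- The box sits between the `(i-1)`-st and `i`-th horizontal strips:
giving the box any value strictly between `i - 1` and `i` would keep rows
weakly increasing and columns strictly increasing. -/
def BoxBetween (i : ℕ) (x : PState) : Prop :=
  (∀ c v, c < x.box.2 → x.T (x.box.1, c) = some v → v ≤ i - 1) ∧
  (∀ c v, x.box.2 < c → x.T (x.box.1, c) = some v → i ≤ v) ∧
  (∀ r v, r < x.box.1 → x.T (r, x.box.2) = some v → v ≤ i - 1) ∧
  (∀ r v, x.box.1 < r → x.T (r, x.box.2) = some v → i ≤ v)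

/-- The set `Xᵢ` of punctured tableaux of content `β` and total shape `γᶜ/α`
with ballot reading word, semistandard rows and columns (omitting `⊠`), in
which `⊠` lies between the `(i-1)`-st and `i`-th horizontal strips. -/
def XSet (k m : ℕ) (a b g : Partition k m) (i : ℕ) : Set PState :=
  {x | x.box ∈ totalShape k m a g ∧
    (∀ p : Cell, (x.T p).isSome ↔ (p ∈ totalShape k m a g ∧ p ≠ x.box)) ∧
    RowsWeak x.T ∧ ColsStrict x.T ∧ PosEntries x.T ∧
    Ballot k m x.T ∧ HasContent k m b x.T ∧ BoxBetween i x}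

/-- One Phase 2 move at value `i` (as a standalone step relation). -/
def P2Step (k m i : ℕ) (x y : PState) : Prop :=
  phase2Cond k m i x ∧ ∃ q, Phase2Move i x q ∧ y = swapState x q i

/-- The operator `ℓᵢ : Xᵢ → Xᵢ₊₁`: the composition of the steps of
`local-esh` exchanging `⊠` with entries equal to `i` (a single Phase 1 move
if some `i` precedes the box, otherwise the Phase 2 loop at value `i`). -/
def LiRel (k m i : ℕ) (x y : PState) : Prop :=
  (∃ q, Phase1Move i x q ∧ y = swapState x q i) ∨
  (¬ phase1Cond i x ∧ Relation.ReflTransGen (P2Step k m i) x y ∧ ¬ phase2Cond k m i y)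

/-- One step of the inward jeu de taquin shuffle in which the box passes an
entry equal to `i`. -/
def SiStep (i : ℕ) (x y : PState) : Prop := InStep x y ∧ x.T y.box = some i

/-- The operator `sᵢ : Xᵢ₊₁ → Xᵢ`: the inward jeu de taquin shuffle of `⊠`
past the entries equal to `i`. -/
def SiRun (i : ℕ) (x y : PState) : Prop :=
  Relation.ReflTransGen (SiStep i) x y ∧ ∀ z, ¬ SiStep i y z

/-- `DownTo j` is the composite `s₁ ∘ s₂ ∘ ⋯ ∘ s_j : X_{j+1} → X₁`. -/
inductive DownTo : ℕ → PState → PState → Prop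
  | zero (x : PState) : DownTo 0 x x
  | succ {j : ℕ} {x y z : PState} : SiRun (j + 1) x y → DownTo j y z → DownTo (j + 1) x z

/-!
Each step of `local-esh` keeps the punctured tableau semistandard and ballot, and keeps bounds on
the entries in the row and the column of `⊠`: in Phase 1 at value `i` the box fits between the
`(i-1)`-st and `i`-th horizontal strips, in Phase 2 at value `i` it fits where an `i + ½` would.
Given these bounds the nearest `i` before the box is neither in its row (the entries west of the
box are smaller) nor east of its column (the entry of the box's row in that column would be `≥ i`
yet lie above it), so a Phase 1 move goes strictly down and weakly left; dually a Phase 2 move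
goes weakly up and strictly right. The strips follow since a Phase 1 state is only reached by a
Phase 1 move, while a Phase 2 state only leads to Phase 2 moves and increments of `i`.

The bounds survive the swaps by semistandardness, and ballotness survives thanks to the nearest-`i`
choice and, in Phase 2, the loop condition. Ballotness in turn is what carries the bounds to the
next value at the end of the Phase 2 loop: an `i` east of the box or an `i + 1` south of it would
leave more `i`'s than `(i+1)`'s after the box.
-/

theorem readBefore_irrefl (p : Cell) : ¬ readBefore p p := by
  simp [readBefore]

theorem readBefore_trans {p q r : Cell} (hpq : readBefore p q) (hqr : readBefore q r) :
    readBefore p r := by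
  unfold readBefore at *
  omega

theorem readBefore_trichotomy (p q : Cell) : readBefore p q ∨ p = q ∨ readBefore q p := by
  unfold readBefore
  rw [Prod.ext_iff]
  omega

def atOrAfter (p q : Cell) : Prop := q = p ∨ readBefore p q

section Counting

open scoped Classical

variable {k m : ℕ} {T : Filling} {P Q : Cell → Prop} {v : ℕ}

theorem countP_congr (h : ∀ p, T p = some v → (P p ↔ Q p)) :
    countP k m T P v = countP k m T Q v := by
  unfold countP
  congr 1
  refine Finset.filter_congr fun p _ => ?_
  constructor
  · exact fun ⟨hP, hv⟩ => ⟨(h p hv).1 hP, hv⟩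
  · exact fun ⟨hQ, hv⟩ => ⟨(h p hv).2 hQ, hv⟩

theorem countP_mono (h : ∀ p, T p = some v → P p → Q p) :
    countP k m T P v ≤ countP k m T Q v := by
  unfold countP
  refine Finset.card_le_card fun p hp => ?_
  simp only [Finset.mem_filter] at hp ⊢
  exact ⟨hp.1, h p hp.2.2 hp.2.1, hp.2.2⟩

theorem countP_add_one_le {s : Cell} (hs : s.1 < k ∧ s.2 < m) (hsv : T s = some v)
    (hQs : Q s) (hPs : ¬ P s) (h : ∀ p, T p = some v → P p → Q p) :
    countP k m T P v + 1 ≤ countP k m T Q v := by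
  unfold countP
  rw [← Finset.card_insert_of_notMem (s := Finset.filter _ _) (a := s) (by simp [hPs])]
  refine Finset.card_le_card fun p hp => ?_
  simp only [Finset.mem_insert, Finset.mem_filter, Finset.mem_product, Finset.mem_range] at hp ⊢
  rcases hp with rfl | hp
  · exact ⟨hs, hQs, hsv⟩
  · exact ⟨hp.1, h p hp.2.2 hp.2.1, hp.2.2⟩

theorem countP_or (h : ∀ p, ¬ (P p ∧ Q p)) :
    countP k m T (fun p => P p ∨ Q p) v = countP k m T P v + countP k m T Q v := by
  unfold countP
  rw [← Finset.card_union_of_disjoint]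
  · congr 1
    ext p
    simp only [Finset.mem_filter, Finset.mem_union]
    tauto
  · exact Finset.disjoint_filter.2 fun p _ hP hQ => h p ⟨hP.1, hQ.1⟩

theorem countP_le_countP_of_injective {w : ℕ} (f : Cell → Cell) (hf : f.Injective)
    (hmaps : ∀ p, T p = some v → P p → Q (f p) ∧ T (f p) = some w ∧ (f p).1 < k ∧ (f p).2 < m) :
    countP k m T P v ≤ countP k m T Q w := by
  unfold countP
  refine Finset.card_le_card_of_injOn f (fun p hp => ?_) hf.injOn
  simp only [Finset.coe_filter, Finset.mem_product, Finset.mem_range] at hp ⊢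
  obtain ⟨h1, h2, h3, h4⟩ := hmaps p hp.2.2 hp.2.1
  exact ⟨⟨h3, h4⟩, h1, h2⟩

theorem countP_update_add {p : Cell} (hp : p.1 < k ∧ p.2 < m) (o : Option ℕ) :
    countP k m (Function.update T p o) P v + (if P p ∧ T p = some v then 1 else 0) =
      countP k m T P v + (if P p ∧ o = some v then 1 else 0) := by
  unfold countP
  have hmem : p ∈ Finset.range k ×ˢ Finset.range m := by simp [hp.1, hp.2]
  simp only [Finset.card_filter]
  rw [← Finset.add_sum_erase _ _ hmem, ← Finset.add_sum_erase _ _ hmem,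
    Finset.sum_congr rfl fun q hq => by rw [Function.update_of_ne (Finset.ne_of_mem_erase hq)]]
  simp only [Function.update_self]
  split_ifs <;> omega

end Counting

section Shape

variable {k m : ℕ} {a g : Partition k m}

theorem lt_of_mem_totalShape {p : Cell} (hp : p ∈ totalShape k m a g) : p.1 < k ∧ p.2 < m :=
  ⟨hp.1, hp.2.2.trans_le (Nat.sub_le _ _)⟩

theorem mem_totalShape_of_between {p q : Cell} {r c : ℕ} (hp : p ∈ totalShape k m a g)
    (hq : q ∈ totalShape k m a g) (hr₁ : p.1 ≤ r) (hr₂ : r ≤ q.1) (hc₁ : p.2 ≤ c)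
    (hc₂ : c ≤ q.2) : (r, c) ∈ totalShape k m a g := by
  obtain ⟨-, hap, -⟩ := hp
  obtain ⟨hkq, -, hgq⟩ := hq
  have hg : g.part (k - 1 - r) ≤ g.part (k - 1 - q.1) := g.antitone' (by omega)
  refine ⟨by omega, (a.antitone' hr₁).trans (hap.trans hc₁), ?_⟩
  change c < m - g.part (k - 1 - r)
  omega

end Shape

/-- The properties of a punctured tableau preserved by every step of `local-esh`: `MemLR1`
without the content and without the condition that `⊠` is an inner co-corner. -/
structure Punctured (k m : ℕ) (a g : Partition k m) (z : PState) : Prop where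
  box_mem : z.box ∈ totalShape k m a g
  isSome_iff : ∀ p, (z.T p).isSome ↔ (p ∈ totalShape k m a g ∧ p ≠ z.box)
  rowsWeak : RowsWeak z.T
  colsStrict : ColsStrict z.T
  pos : PosEntries z.T
  ballot : Ballot k m z.T

namespace Punctured

variable {k m : ℕ} {a g : Partition k m} {z : PState}

theorem T_box (hz : Punctured k m a g z) : z.T z.box = none := by
  simpa using hz.isSome_iff z.box

theorem mem_of_eq_some (hz : Punctured k m a g z) {p : Cell} {v : ℕ} (hv : z.T p = some v) :
    p ∈ totalShape k m a g ∧ p ≠ z.box :=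
  (hz.isSome_iff p).1 (by simp [hv])

theorem exists_eq_some_of_between (hz : Punctured k m a g z) {p q : Cell} {r c : ℕ}
    (hp : p ∈ totalShape k m a g) (hq : q ∈ totalShape k m a g) (hr₁ : p.1 ≤ r)
    (hr₂ : r ≤ q.1) (hc₁ : p.2 ≤ c) (hc₂ : c ≤ q.2) (hne : (r, c) ≠ z.box) :
    ∃ v, z.T (r, c) = some v :=
  Option.isSome_iff_exists.1 <|
    (hz.isSome_iff _).2 ⟨mem_totalShape_of_between hp hq hr₁ hr₂ hc₁ hc₂, hne⟩

end Punctured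

section Swap

variable {z : PState} {q : Cell} {i : ℕ}

theorem swapState_T_eq_some (hq : q ≠ z.box) {p : Cell} {v : ℕ}
    (hp : (swapState z q i).T p = some v) :
    (p = z.box ∧ v = i) ∨ (p ≠ z.box ∧ p ≠ q ∧ z.T p = some v) := by
  simp only [swapState] at hp
  by_cases hpb : p = z.box
  · subst hpb
    simp_all
  · by_cases hpq : p = q
    · subst hpq
      simp_all
    · rw [Function.update_of_ne hpb, Function.update_of_ne hpq] at hp
      exact Or.inr ⟨hpb, hpq, hp⟩

variable {k m : ℕ} {P : Cell → Prop}

open scoped Classical in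
theorem countP_swapState_add (hb : z.T z.box = none) (hq : z.T q = some i)
    (hbr : z.box.1 < k ∧ z.box.2 < m) (hqr : q.1 < k ∧ q.2 < m) (v : ℕ) :
    countP k m (swapState z q i).T P v + (if P q ∧ i = v then 1 else 0) =
      countP k m z.T P v + (if P z.box ∧ i = v then 1 else 0) := by
  have hne : z.box ≠ q := by rintro h; simp [h, hq] at hb
  have h₁ := countP_update_add (T := Function.update z.T q none) (P := P) (v := v) hbr (some i)
  have h₂ := countP_update_add (T := z.T) (P := P) (v := v) hqr none
  simp only [Function.update_of_ne hne, hb, hq, reduceCtorEq, and_false, if_false,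
    Option.some.injEq, add_zero] at h₁ h₂
  simp only [swapState]
  omega

theorem countP_swapState_self (hb : z.T z.box = none) (hq : z.T q = some i)
    (hbr : z.box.1 < k ∧ z.box.2 < m) (hqr : q.1 < k ∧ q.2 < m) [Decidable (P q)]
    [Decidable (P z.box)] :
    countP k m (swapState z q i).T P i + (if P q then 1 else 0) =
      countP k m z.T P i + (if P z.box then 1 else 0) := by
  have h := countP_swapState_add (P := P) hb hq hbr hqr i
  simp only [and_true] at h
  split_ifs at h ⊢ <;> omega

theorem countP_swapState_of_ne (hb : z.T z.box = none) (hq : z.T q = some i)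
    (hbr : z.box.1 < k ∧ z.box.2 < m) (hqr : q.1 < k ∧ q.2 < m) {v : ℕ} (hv : v ≠ i) :
    countP k m (swapState z q i).T P v = countP k m z.T P v := by
  simpa [Ne.symm hv] using countP_swapState_add (P := P) hb hq hbr hqr v

end Swap

theorem Ballot.countP_readBefore_le {k m : ℕ} {T : Filling} (hB : Ballot k m T) (c : Cell)
    {i : ℕ} (hi : 1 ≤ i) :
    countP k m T (readBefore c) (i + 1) ≤ countP k m T (readBefore c) i := by
  have hsuffix : ∀ v, countP k m T (atOrAfter (c.1, c.2 + 1)) v = countP k m T (readBefore c) v :=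
    fun v => countP_congr fun p _ => by
      unfold atOrAfter readBefore
      rw [Prod.ext_iff]
      omega
  rw [← hsuffix, ← hsuffix]
  exact hB _ i hi

open scoped Classical in
theorem Ballot.swapState {k m : ℕ} {z : PState} {q : Cell} {i : ℕ} (hB : Ballot k m z.T)
    (hb : z.T z.box = none) (hq : z.T q = some i) (hbr : z.box.1 < k ∧ z.box.2 < m)
    (hqr : q.1 < k ∧ q.2 < m)
    (hlose : ∀ c, atOrAfter c q → ¬ atOrAfter c z.box →
      countP k m z.T (atOrAfter c) (i + 1) < countP k m z.T (atOrAfter c) i)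
    (hgain : 2 ≤ i → ∀ c, atOrAfter c z.box → ¬ atOrAfter c q →
      countP k m z.T (atOrAfter c) i < countP k m z.T (atOrAfter c) (i - 1)) :
    Ballot k m (swapState z q i).T := by
  intro c j hj
  change countP k m _ (atOrAfter c) (j + 1) ≤ countP k m _ (atOrAfter c) j
  have E := countP_swapState_self (P := atOrAfter c) hb hq hbr hqr
  have hBc := hB c j hj
  change countP k m _ (atOrAfter c) (j + 1) ≤ countP k m _ (atOrAfter c) j at hBc
  by_cases hji : j = i
  · subst hji
    rw [countP_swapState_of_ne hb hq hbr hqr (show j + 1 ≠ j by omega)]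
    by_cases hlost : atOrAfter c q ∧ ¬ atOrAfter c z.box
    · have := hlose c hlost.1 hlost.2
      rw [if_pos hlost.1, if_neg hlost.2] at E
      omega
    · split_ifs at E <;> first | omega | tauto
  by_cases hji' : j + 1 = i
  · subst hji'
    rw [countP_swapState_of_ne hb hq hbr hqr (show j ≠ j + 1 by omega)]
    by_cases hgained : atOrAfter c z.box ∧ ¬ atOrAfter c q
    · have := hgain (by omega) c hgained.1 hgained.2
      rw [if_neg hgained.2, if_pos hgained.1] at E
      simp only [Nat.add_sub_cancel] at this
      omega
    · split_ifs at E <;> first | omega | tauto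
  rw [countP_swapState_of_ne hb hq hbr hqr hji', countP_swapState_of_ne hb hq hbr hqr hji]
  exact hBc

/-- `BoxBounds z (i - 1) i (i - 1) i` is `BoxBetween i z`, the condition defining `Xᵢ`. -/
structure BoxBounds (z : PState) (west east north south : ℕ) : Prop where
  le_west : ∀ c v, c < z.box.2 → z.T (z.box.1, c) = some v → v ≤ west
  east_le : ∀ c v, z.box.2 < c → z.T (z.box.1, c) = some v → east ≤ v
  le_north : ∀ r v, r < z.box.1 → z.T (r, z.box.2) = some v → v ≤ north
  south_le : ∀ r v, z.box.1 < r → z.T (r, z.box.2) = some v → south ≤ v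

theorem BoxBounds.mono {z : PState} {w e n s w' e' n' s' : ℕ} (h : BoxBounds z w e n s)
    (hw : w ≤ w') (he : e' ≤ e) (hn : n ≤ n') (hs : s' ≤ s) : BoxBounds z w' e' n' s' :=
  ⟨fun c v hc hv => (h.le_west c v hc hv).trans hw,
    fun c v hc hv => he.trans (h.east_le c v hc hv),
    fun r v hr hv => (h.le_north r v hr hv).trans hn,
    fun r v hr hv => hs.trans (h.south_le r v hr hv)⟩

namespace Punctured

variable {k m : ℕ} {a g : Partition k m} {z : PState}

theorem eq_succ_of_south {w e n s r : ℕ} (hz : Punctured k m a g z) (hB : BoxBounds z w e n s)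
    (hr : z.box.1 < r) (hv : z.T (r, z.box.2) = some s) : r = z.box.1 + 1 := by
  by_contra hne
  obtain ⟨u, hu⟩ := hz.exists_eq_some_of_between (r := z.box.1 + 1) (c := z.box.2) hz.box_mem
    (hz.mem_of_eq_some hv).1 (by omega) (by simp; omega) le_rfl (by simp)
    (fun h => by simp [Prod.ext_iff] at h)
  have := hB.south_le _ u (by omega) hu
  have := hz.colsStrict _ _ _ u s (by omega) hu hv
  omega

theorem swapState {q : Cell} {i : ℕ} (hz : Punctured k m a g z) (hq : z.T q = some i)
    (hi : 1 ≤ i) (hB : BoxBounds z i i (i - 1) i)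
    (hsouth : ∀ r, z.box.1 < r → z.T (r, z.box.2) = some i → (r, z.box.2) = q)
    (hballot : Ballot k m (swapState z q i).T) : Punctured k m a g (swapState z q i) := by
  obtain ⟨hqS, hqb⟩ := hz.mem_of_eq_some hq
  refine ⟨hqS, fun p => ?_, ?_, ?_, ?_, hballot⟩
  · simp only [SC.swapState]
    by_cases hpb : p = z.box
    · subst hpb
      simpa using ⟨hz.box_mem, Ne.symm hqb⟩
    · by_cases hpq : p = q
      · subst hpq
        simp [Function.update_of_ne hqb]
      · rw [Function.update_of_ne hpb, Function.update_of_ne hpq, hz.isSome_iff]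
        tauto
  · intro r c₁ c₂ v₁ v₂ hc h₁ h₂
    rcases swapState_T_eq_some hqb h₁ with ⟨hp₁, hv₁⟩ | ⟨hp₁, -, h₁'⟩ <;>
      rcases swapState_T_eq_some hqb h₂ with ⟨hp₂, hv₂⟩ | ⟨hp₂, -, h₂'⟩
    · omega
    · simp only [Prod.ext_iff, ne_eq] at hp₁ hp₂
      have := hB.east_le c₂ v₂ (by omega) (hp₁.1 ▸ h₂')
      omega
    · simp only [Prod.ext_iff, ne_eq] at hp₁ hp₂
      have := hB.le_west c₁ v₁ (by omega) (hp₂.1 ▸ h₁')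
      omega
    · exact hz.rowsWeak r c₁ c₂ v₁ v₂ hc h₁' h₂'
  · intro r₁ r₂ c v₁ v₂ hr h₁ h₂
    rcases swapState_T_eq_some hqb h₁ with ⟨hp₁, hv₁⟩ | ⟨hp₁, -, h₁'⟩ <;>
      rcases swapState_T_eq_some hqb h₂ with ⟨hp₂, hv₂⟩ | ⟨hp₂, hpq₂, h₂'⟩
    · simp only [Prod.ext_iff] at hp₁ hp₂
      omega
    · simp only [Prod.ext_iff] at hp₁
      have hs := hB.south_le r₂ v₂ (by omega) (hp₁.2 ▸ h₂')
      refine hv₁ ▸ lt_of_le_of_ne hs fun hv => hpq₂ ?_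
      exact hp₁.2 ▸ hsouth r₂ (by omega) (hp₁.2 ▸ hv ▸ h₂')
    · simp only [Prod.ext_iff] at hp₂
      have := hB.le_north r₁ v₁ (by omega) (hp₂.2 ▸ h₁')
      omega
    · exact hz.colsStrict r₁ r₂ c v₁ v₂ hr h₁' h₂'
  · intro p v hv
    rcases swapState_T_eq_some hqb hv with ⟨-, rfl⟩ | ⟨-, -, hv⟩
    · exact hi
    · exact hz.pos p v hv

end Punctured

/-- The strict inequality is what lets the Phase 1 move at value `i`, which carries an `i` later
in reading order, keep the reading word ballot. -/
def Phase1Inv (k m i : ℕ) (z : PState) : Prop :=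
  BoxBounds z (i - 1) i (i - 1) i ∧
    (2 ≤ i → countP k m z.T (readBefore z.box) i < countP k m z.T (readBefore z.box) (i - 1))

namespace Phase1Move

variable {k m : ℕ} {a g : Partition k m} {z : PState} {q : Cell} {i : ℕ}

theorem row_lt_and_col_le {n s : ℕ} (hz : Punctured k m a g z) (hB : BoxBounds z (i - 1) i n s)
    (hi : 1 ≤ i) (hq : Phase1Move i z q) : z.box.1 < q.1 ∧ q.2 ≤ z.box.2 := by
  obtain ⟨hqi, hqb, -⟩ := hq
  have hrow : z.box.1 < q.1 := by
    rcases hqb with h | ⟨h, hc⟩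
    · exact h
    · have := hB.le_west q.2 i hc (by rw [← h]; exact hqi)
      omega
  refine ⟨hrow, not_lt.1 fun hc => ?_⟩
  obtain ⟨u, hu⟩ := hz.exists_eq_some_of_between (r := z.box.1) (c := q.2) hz.box_mem
    (hz.mem_of_eq_some hqi).1 le_rfl hrow.le hc.le le_rfl
    (fun h => by simp [Prod.ext_iff] at h; omega)
  have := hB.east_le q.2 u hc hu
  have := hz.colsStrict _ _ _ u i hrow hu hqi
  omega

theorem eq_of_south {n : ℕ} (hz : Punctured k m a g z) (hB : BoxBounds z (i - 1) i n i)
    (hi : 1 ≤ i) (hq : Phase1Move i z q) {r : ℕ} (hr : z.box.1 < r)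
    (hv : z.T (r, z.box.2) = some i) : (r, z.box.2) = q := by
  have hr' := hz.eq_succ_of_south hB hr hv
  have hlt := hq.row_lt_and_col_le hz hB hi
  rcases hq.2.2 _ hv (Or.inl hr) with h | h
  · exact h
  · unfold readBefore at h
    omega

theorem ballot (hz : Punctured k m a g z) (hP : Phase1Inv k m i z)
    (hq : Phase1Move i z q) : Ballot k m (swapState z q i).T := by
  obtain ⟨hqi, hqb, hnear⟩ := hq
  have hbr := lt_of_mem_totalShape hz.box_mem
  have hqr := lt_of_mem_totalShape (hz.mem_of_eq_some hqi).1
  refine hz.ballot.swapState hz.T_box hqi hbr hqr (fun c hcq hcb => ?_) fun hi2 c hcb hcq => ?_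
  · exact absurd (Or.inr (hcq.elim (· ▸ hqb) (readBefore_trans · hqb))) hcb
  -- the `i`'s at or after `c` are exactly those after the box, as `q` is the last `i` before it
  have hqc : readBefore q c := by
    rcases readBefore_trichotomy c q with h | h | h
    · exact absurd (Or.inr h) hcq
    · exact absurd (Or.inl h.symm) hcq
    · exact h
  have hcount : countP k m z.T (atOrAfter c) i = countP k m z.T (readBefore z.box) i :=
    countP_congr fun p hp => by
      constructor
      · intro hcp
        rcases readBefore_trichotomy z.box p with h | rfl | h
        · exact h
        · simp [hz.T_box] at hp
        · have hpq : readBefore q p := hcp.elim (· ▸ hqc) (readBefore_trans hqc)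
          rcases hnear p hp h with rfl | h'
          · exact absurd hpq (readBefore_irrefl _)
          · exact absurd (readBefore_trans hpq h') (readBefore_irrefl _)
      · exact fun h => Or.inr (hcb.elim (· ▸ h) (readBefore_trans · h))
  have hmono : countP k m z.T (readBefore z.box) (i - 1) ≤ countP k m z.T (atOrAfter c) (i - 1) :=
    countP_mono fun p _ h => Or.inr (hcb.elim (· ▸ h) (readBefore_trans · h))
  have := hP.2 hi2
  omega

theorem boxBounds_swapState (hz : Punctured k m a g z) (hi : 1 ≤ i) (hq : Phase1Move i z q)
    (hlt : z.box.1 < q.1 ∧ q.2 ≤ z.box.2) : BoxBounds (swapState z q i) i (i + 1) i (i + 1) := by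
  obtain ⟨hqi, -, hnear⟩ := hq
  have hqb := (hz.mem_of_eq_some hqi).2
  have hqi' : z.T (q.1, q.2) = some i := hqi
  refine ⟨fun c v hc hv => ?_, fun c v hc hv => ?_, fun r v hr hv => ?_, fun r v hr hv => ?_⟩ <;>
    rcases swapState_T_eq_some hqb hv with ⟨hp, rfl⟩ | ⟨-, -, hv⟩ <;>
    simp only [SC.swapState, Prod.ext_iff] at *
  · omega
  · exact hz.rowsWeak _ _ _ _ _ hc.le hv hqi'
  · omega
  · -- an `i` east of `q` would be an `i` before the box and closer to it than `q`
    refine Nat.lt_of_le_of_ne (hz.rowsWeak _ _ _ _ _ hc.le hqi' hv) fun hvi => ?_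
    subst hvi
    rcases hnear _ hv (Or.inl hlt.1) with h | h
    · simp at h
      omega
    · unfold readBefore at h
      omega
  · omega
  · have := hz.colsStrict _ _ _ _ _ hr hv hqi'
    omega
  · omega
  · exact hz.colsStrict _ _ _ _ _ hr hqi' hv

theorem countP_swapState_lt (hz : Punctured k m a g z) (hi : 1 ≤ i) (hq : Phase1Move i z q) :
    countP k m (swapState z q i).T (readBefore q) (i + 1) <
      countP k m (swapState z q i).T (readBefore q) i := by
  classical
  obtain ⟨hqi, hqb, -⟩ := hq
  have hbr := lt_of_mem_totalShape hz.box_mem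
  have hqr := lt_of_mem_totalShape (hz.mem_of_eq_some hqi).1
  have E := countP_swapState_self (P := readBefore q) hz.T_box hqi hbr hqr
  rw [if_neg (readBefore_irrefl q), if_pos hqb] at E
  rw [countP_swapState_of_ne hz.T_box hqi hbr hqr (show i + 1 ≠ i by omega)]
  have := hz.ballot.countP_readBefore_le q hi
  omega

theorem swapState (hz : Punctured k m a g z) (hP : Phase1Inv k m i z) (hi : 1 ≤ i)
    (hq : Phase1Move i z q) :
    Punctured k m a g (swapState z q i) ∧ Phase1Inv k m (i + 1) (swapState z q i) := by
  refine ⟨hz.swapState hq.1 hi (hP.1.mono (by omega) le_rfl le_rfl le_rfl)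
      (fun r hr hv => hq.eq_of_south hz hP.1 hi hr hv) (hq.ballot hz hP), ?_, fun _ => ?_⟩
  · simpa using hq.boxBounds_swapState hz hi (hq.row_lt_and_col_le hz hP.1 hi)
  · rw [Nat.add_sub_cancel]
    exact hq.countP_swapState_lt hz hi

end Phase1Move

namespace Phase2Move

variable {k m : ℕ} {a g : Partition k m} {z : PState} {q : Cell} {i : ℕ}

theorem row_le_and_col_lt {e s : ℕ} (hz : Punctured k m a g z) (hB : BoxBounds z i e (i - 1) s)
    (hi : 1 ≤ i) (hq : Phase2Move i z q) : q.1 ≤ z.box.1 ∧ z.box.2 < q.2 := by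
  obtain ⟨hqi, hbq, -⟩ := hq
  rcases hbq with hrow | ⟨hrow, hc⟩
  · refine ⟨hrow.le, not_le.1 fun hc => ?_⟩
    rcases hc.lt_or_eq with hc | hc
    · obtain ⟨u, hu⟩ := hz.exists_eq_some_of_between (r := z.box.1) (c := q.2)
        (hz.mem_of_eq_some hqi).1 hz.box_mem hrow.le le_rfl le_rfl hc.le
        (fun h => by simp [Prod.ext_iff] at h; omega)
      have := hB.le_west q.2 u hc hu
      have := hz.colsStrict _ _ _ i u hrow hqi hu
      omega
    · have := hB.le_north q.1 i hrow (by rw [← hc]; exact hqi)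
      omega
  · exact ⟨hrow.ge, hc⟩

theorem ballot (hz : Punctured k m a g z) (hc : phase2Cond k m i z) (hq : Phase2Move i z q) :
    Ballot k m (swapState z q i).T := by
  obtain ⟨hqi, hbq, hnear⟩ := hq
  have hbr := lt_of_mem_totalShape hz.box_mem
  have hqr := lt_of_mem_totalShape (hz.mem_of_eq_some hqi).1
  refine hz.ballot.swapState hz.T_box hqi hbr hqr (fun c hcq hcb => ?_) fun _ c hcb hcq => ?_
  swap
  · exact absurd (Or.inr (hcb.elim (· ▸ hbq) (readBefore_trans · hbq))) hcq
  have hbc : readBefore z.box c := by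
    rcases readBefore_trichotomy c z.box with h | h | h
    · exact absurd (Or.inr h) hcb
    · exact absurd (Or.inl h.symm) hcb
    · exact h
  -- the `i`'s at or after `c` are exactly those after the box, as `q` is the first `i` after it
  have hcount : countP k m z.T (atOrAfter c) i = countP k m z.T (readBefore z.box) i :=
    countP_congr fun p hp => by
      constructor
      · exact fun h => h.elim (· ▸ hbc) (readBefore_trans hbc)
      · intro hbp
        rcases hnear p hp hbp with rfl | h
        · exact hcq
        · exact Or.inr (hcq.elim (· ▸ h) (readBefore_trans · h))
  have hmono : countP k m z.T (atOrAfter c) (i + 1) ≤ countP k m z.T (readBefore z.box) (i + 1) :=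
    countP_mono fun p _ h => h.elim (· ▸ hbc) (readBefore_trans hbc)
  change countP k m z.T (readBefore z.box) (i + 1) < countP k m z.T (readBefore z.box) i at hc
  omega

theorem boxBounds_swapState (hz : Punctured k m a g z) (hq : Phase2Move i z q)
    (hlt : q.1 ≤ z.box.1 ∧ z.box.2 < q.2) :
    BoxBounds (swapState z q i) i i (i - 1) (i + 1) := by
  obtain ⟨hqi, -, -⟩ := hq
  have hqb := (hz.mem_of_eq_some hqi).2
  have hqi' : z.T (q.1, q.2) = some i := hqi
  refine ⟨fun c v hc hv => ?_, fun c v hc hv => ?_, fun r v hr hv => ?_, fun r v hr hv => ?_⟩ <;>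
    rcases swapState_T_eq_some hqb hv with ⟨hp, rfl⟩ | ⟨-, -, hv⟩ <;>
    simp only [SC.swapState, Prod.ext_iff] at *
  · exact le_rfl
  · exact hz.rowsWeak _ _ _ _ _ hc.le hv hqi'
  · omega
  · exact hz.rowsWeak _ _ _ _ _ hc.le hqi' hv
  · omega
  · have := hz.colsStrict _ _ _ _ _ hr hv hqi'
    omega
  · omega
  · exact hz.colsStrict _ _ _ _ _ hr hqi' hv

theorem swapState (hz : Punctured k m a g z) (hB : BoxBounds z i i (i - 1) (i + 1)) (hi : 1 ≤ i)
    (hc : phase2Cond k m i z) (hq : Phase2Move i z q) :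
    Punctured k m a g (swapState z q i) ∧ BoxBounds (swapState z q i) i i (i - 1) (i + 1) :=
  ⟨hz.swapState hq.1 hi (hB.mono le_rfl le_rfl le_rfl (by omega))
      (fun r hr hv => absurd (hB.south_le r i hr hv) (by omega)) (hq.ballot hz hc),
    hq.boxBounds_swapState hz (hq.row_le_and_col_lt hz hB hi)⟩

end Phase2Move

namespace Punctured

variable {k m : ℕ} {a g : Partition k m} {z : PState} {i : ℕ}

theorem phase2Cond_of_east (hz : Punctured k m a g z) (hi : 1 ≤ i) {t : ℕ} (ht : z.box.2 < t)
    (hv : z.T (z.box.1, t) = some i) : phase2Cond k m i z := by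
  have hbs : readBefore z.box (z.box.1, t) := Or.inr ⟨rfl, ht⟩
  have hsucc : countP k m z.T (readBefore z.box) (i + 1) ≤
      countP k m z.T (readBefore (z.box.1, t)) (i + 1) :=
    countP_mono fun p hp hbp => by
      rcases readBefore_trichotomy (z.box.1, t) p with h | rfl | h
      · exact h
      · simp [hv] at hp
      · unfold readBefore at h hbp
        have hrow : p.1 = z.box.1 ∧ p.2 < t := by omega
        have := hz.rowsWeak _ _ _ _ _ hrow.2.le (by rw [← hrow.1]; exact hp) hv
        omega
  have hself : countP k m z.T (readBefore (z.box.1, t)) i + 1 ≤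
      countP k m z.T (readBefore z.box) i :=
    countP_add_one_le (lt_of_mem_totalShape (hz.mem_of_eq_some hv).1) hv hbs
      (readBefore_irrefl _) fun p _ => readBefore_trans hbs
  have := hz.ballot.countP_readBefore_le (z.box.1, t) hi
  change countP k m z.T (readBefore z.box) (i + 1) < countP k m z.T (readBefore z.box) i
  omega

/-- If an `i + 1` lies south of the box then, `c₀` being the first column of the row below the
box to carry an `i + 1`, every `i` west of the box sits above an `i + 1` in that row, so ballotness
of the suffix from `(z.box.1 + 1, c₀)` forces more `i`'s than `(i+1)`'s after the box. -/
theorem phase2Cond_of_south (hz : Punctured k m a g z) (hB : BoxBounds z i i (i - 1) (i + 1))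
    (hi : 1 ≤ i) {r : ℕ} (hr : z.box.1 < r) (hv : z.T (r, z.box.2) = some (i + 1)) :
    phase2Cond k m i z := by
  classical
  obtain rfl := hz.eq_succ_of_south hB hr hv
  have hex : ∃ c, c ≤ z.box.2 ∧ z.T (z.box.1 + 1, c) = some (i + 1) := ⟨_, le_rfl, hv⟩
  obtain ⟨hc₀, hv₀⟩ := Nat.find_spec hex
  set c₀ := Nat.find hex
  have hbelow : ∀ c, c < z.box.2 → z.T (z.box.1, c) = some i →
      z.T (z.box.1 + 1, c) = some (i + 1) := by
    intro c hc hvc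
    obtain ⟨u, hu⟩ := hz.exists_eq_some_of_between (r := z.box.1 + 1) (c := c)
      (hz.mem_of_eq_some hvc).1 (hz.mem_of_eq_some hv).1 (by simp) le_rfl le_rfl hc.le
      (fun h => by simp [Prod.ext_iff] at h)
    have := hz.colsStrict _ _ _ _ _ (Nat.lt_succ_self _) hvc hu
    have := hz.rowsWeak _ _ _ _ _ hc.le hu hv
    rwa [show u = i + 1 by omega] at hu
  let D : Cell → Prop := fun p =>
    (p.1 = z.box.1 + 1 ∧ c₀ ≤ p.2) ∨ (p.1 = z.box.1 ∧ p.2 ≤ z.box.2)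
  have hsplit : ∀ v, countP k m z.T (atOrAfter (z.box.1 + 1, c₀)) v =
      countP k m z.T D v + countP k m z.T (readBefore z.box) v := by
    intro v
    rw [← countP_or fun p ⟨hD, hb⟩ => by unfold readBefore at hb; omega]
    exact countP_congr fun p _ => by
      unfold atOrAfter readBefore
      rw [Prod.ext_iff]
      omega
  have hshift : countP k m z.T D i ≤
      countP k m z.T (fun p => D p ∧ p ≠ (z.box.1 + 1, z.box.2)) (i + 1) := by
    refine countP_le_countP_of_injective (fun p => (p.1 + 1, p.2))
      (fun p p' h => by simp only [Prod.ext_iff] at h ⊢; omega) fun p hp hD => ?_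
    have hrow : p.1 = z.box.1 ∧ p.2 < z.box.2 := by
      rcases hD with ⟨h₁, h₂⟩ | ⟨h₁, h₂⟩
      · have := hz.rowsWeak _ _ _ _ _ h₂ hv₀ (by rw [← h₁]; exact hp)
        omega
      · refine ⟨h₁, lt_of_le_of_ne h₂ fun h₂ => ?_⟩
        simp [show p = z.box from Prod.ext h₁ h₂, hz.T_box] at hp
    have hp' := hbelow p.2 hrow.2 (by rw [← hrow.1]; exact hp)
    refine ⟨⟨Or.inl ⟨by simp [hrow.1], Nat.find_min' hex ⟨hrow.2.le, hp'⟩⟩, ?_⟩, ?_, ?_⟩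
    · simp only [ne_eq, Prod.ext_iff]
      omega
    · simpa [hrow.1] using hp'
    · simpa [hrow.1] using lt_of_mem_totalShape (hz.mem_of_eq_some hp').1
  have hself : countP k m z.T (fun p => D p ∧ p ≠ (z.box.1 + 1, z.box.2)) (i + 1) + 1 ≤
      countP k m z.T D (i + 1) :=
    countP_add_one_le (lt_of_mem_totalShape (hz.mem_of_eq_some hv).1) hv (Or.inl ⟨rfl, hc₀⟩)
      (fun h => h.2 rfl) fun _ _ h => h.1
  have hballot := hz.ballot (z.box.1 + 1, c₀) i hi
  change countP k m z.T (atOrAfter _) (i + 1) ≤ countP k m z.T (atOrAfter _) i at hballot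
  rw [hsplit, hsplit] at hballot
  change countP k m z.T (readBefore z.box) (i + 1) < countP k m z.T (readBefore z.box) i
  omega

theorem boxBounds_succ_of_not_phase2Cond (hz : Punctured k m a g z)
    (hB : BoxBounds z i i (i - 1) (i + 1)) (hi : 1 ≤ i) (hnc : ¬ phase2Cond k m i z) :
    BoxBounds z (i + 1) (i + 1) i (i + 1 + 1) where
  le_west c v hc hv := (hB.le_west c v hc hv).trans (Nat.le_succ i)
  east_le c v hc hv := lt_of_le_of_ne (hB.east_le c v hc hv) fun h =>
    hnc (hz.phase2Cond_of_east hi hc (h ▸ hv))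
  le_north r v hr hv := (hB.le_north r v hr hv).trans (Nat.sub_le i 1)
  south_le r v hr hv := lt_of_le_of_ne (hB.south_le r v hr hv) fun h =>
    hnc (hz.phase2Cond_of_south hB hi hr (h ▸ hv))

end Punctured

theorem BoxBounds.phase2_of_not_phase1Cond {z : PState} {i : ℕ}
    (hB : BoxBounds z (i - 1) i (i - 1) i) (hnc : ¬ phase1Cond i z) :
    BoxBounds z i i (i - 1) (i + 1) :=
  ⟨fun c v hc hv => (hB.le_west c v hc hv).trans (Nat.sub_le i 1), hB.east_le, hB.le_north,
    fun r v hr hv => lt_of_le_of_ne (hB.south_le r v hr hv) fun h =>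
      hnc ⟨(r, z.box.2), h ▸ hv, Or.inl hr⟩⟩

def StepInv (k m : ℕ) (a g : Partition k m) : ℕ × Bool × PState → Prop
  | (i, false, z) => 1 ≤ i ∧ Punctured k m a g z ∧ Phase1Inv k m i z
  | (i, true, z) => 1 ≤ i ∧ Punctured k m a g z ∧ BoxBounds z i i (i - 1) (i + 1)

section StepInv

variable {k m lb : ℕ} {a g : Partition k m} {st st' : ℕ × Bool × PState}

theorem stepInv_start {b : Partition k m} {x : PState} (hx : MemLR1 k m a b g x) :
    StepInv k m a g (1, false, x) := by
  obtain ⟨hbox, hshape, hrow, hcol, hpos, hballot, -, hwest, hnorth⟩ := hx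
  have hz : Punctured k m a g x := ⟨hbox, hshape, hrow, hcol, hpos, hballot⟩
  -- as `⊠` is an inner co-corner, nothing lies west of it or north of it
  refine ⟨le_rfl, hz, ⟨fun c v hc hv => ?_, fun _ v _ hv => hpos _ v hv,
    fun r v hr hv => ?_, fun _ v _ hv => hpos _ v hv⟩, by omega⟩
  · obtain ⟨u, hu⟩ := hz.exists_eq_some_of_between (r := x.box.1) (c := x.box.2 - 1)
      (hz.mem_of_eq_some hv).1 hbox le_rfl le_rfl (by simp; omega) (by omega)
      (fun h => by simp [Prod.ext_iff] at h; omega)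
    exact absurd (by simp [shapeOf, hu]) hwest
  · obtain ⟨u, hu⟩ := hz.exists_eq_some_of_between (r := x.box.1 - 1) (c := x.box.2)
      (hz.mem_of_eq_some hv).1 hbox (by simp; omega) (by omega) le_rfl le_rfl
      (fun h => by simp [Prod.ext_iff] at h; omega)
    exact absurd (by simp [shapeOf, hu]) hnorth

theorem StepInv.step (hI : StepInv k m a g st) (h : Step k m lb st st') :
    StepInv k m a g st' := by
  cases h with
  | p1 _ hq =>
    obtain ⟨hi, hz, hP⟩ := hI
    exact ⟨by omega, hq.swapState hz hP hi⟩
  | p1to2 _ hnc =>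
    obtain ⟨hi, hz, hP⟩ := hI
    exact ⟨hi, hz, hP.1.phase2_of_not_phase1Cond hnc⟩
  | p2 _ hc hq =>
    obtain ⟨hi, hz, hB⟩ := hI
    exact ⟨hi, hq.swapState hz hB hi hc⟩
  | p2inc _ hnc =>
    obtain ⟨hi, hz, hB⟩ := hI
    exact ⟨by omega, hz, by simpa using hz.boxBounds_succ_of_not_phase2Cond hB hi hnc⟩

theorem StepInv.reflTransGen (hI : StepInv k m a g st)
    (h : Relation.ReflTransGen (Step k m lb) st st') : StepInv k m a g st' := by
  induction h with
  | refl => exact hI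
  | tail _ hstep ih => exact ih.step hstep

theorem StepInv.row_lt_and_col_le_of_phase1_step {i j : ℕ} {z w : PState}
    (hI : StepInv k m a g (i, false, z))
    (h : Step k m lb (i, false, z) (j, false, w)) : z.box.1 < w.box.1 ∧ w.box.2 ≤ z.box.2 := by
  cases h with
  | p1 _ hq => exact hq.row_lt_and_col_le hI.2.1 hI.2.2.1 hI.1

theorem StepInv.eq_or_row_le_and_col_lt_of_phase2_step {i j : ℕ} {z w : PState}
    (hI : StepInv k m a g (i, true, z))
    (h : Step k m lb (i, true, z) (j, true, w)) :
    w = z ∨ w.box.1 ≤ z.box.1 ∧ z.box.2 < w.box.2 := by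
  cases h with
  | p2 _ _ hq => exact Or.inr (hq.row_le_and_col_lt hI.2.1 hI.2.2 hI.1)
  | p2inc _ _ => exact Or.inl rfl

/-- Only Phase 1 moves lead into a Phase 1 state, so along a path ending in Phase 1 the row of
the box strictly increases. -/
theorem StepInv.box_row_lt_of_phase1 (hI : StepInv k m a g st)
    (h : Relation.ReflTransGen (Step k m lb) st st') (hst' : st'.2.1 = false) :
    st.2.2.box = st'.2.2.box ∨ st.2.2.box.1 < st'.2.2.box.1 := by
  induction h with
  | refl => exact Or.inl rfl
  | @tail mid st' hpath hstep ih =>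
    obtain ⟨i, _ | _, z⟩ := mid
    · obtain ⟨j, _ | _, w⟩ := st'
      · have hlt := (hI.reflTransGen hpath).row_lt_and_col_le_of_phase1_step hstep
        exact Or.inr ((ih rfl).elim (fun h => h ▸ hlt.1) fun h => h.trans hlt.1)
      · simp at hst'
    · cases hstep <;> simp at hst'

/-- Phase 2 states only lead to Phase 2 states, along which the column of the box strictly
increases. -/
theorem StepInv.box_col_lt_of_phase2 (hI : StepInv k m a g st)
    (h : Relation.ReflTransGen (Step k m lb) st st') (hst : st.2.1 = true) :
    st.2.2.box = st'.2.2.box ∨ st.2.2.box.2 < st'.2.2.box.2 := by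
  induction h using Relation.ReflTransGen.head_induction_on with
  | refl => exact Or.inl rfl
  | @head st mid hstep hpath ih =>
    obtain ⟨i, _ | _, z⟩ := st
    · simp at hst
    obtain ⟨j, _ | _, w⟩ := mid
    · cases hstep
    rcases hI.eq_or_row_le_and_col_lt_of_phase2_step hstep with rfl | hmove
    · exact ih (hI.step hstep) rfl
    · exact Or.inr ((ih (hI.step hstep) rfl).elim (fun h => h ▸ hmove.2) hmove.2.trans)

end StepInv

theorem stmt_5_general (k m : ℕ) (a b g : Partition k m)
    (x : PState) (hx : MemLR1 k m a b g x) :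
    (∀ (i : ℕ) (z w : PState),
      Relation.ReflTransGen (Step k m b.length) (1, false, x) (i, false, z) →
      Step k m b.length (i, false, z) (i + 1, false, w) →
      z.box.1 < w.box.1 ∧ w.box.2 ≤ z.box.2) ∧
    (∀ (i : ℕ) (z w : PState),
      Relation.ReflTransGen (Step k m b.length) (1, false, x) (i, true, z) →
      Step k m b.length (i, true, z) (i, true, w) →
      w.box.1 ≤ z.box.1 ∧ z.box.2 < w.box.2) ∧
    (∀ (i j : ℕ) (z w : PState),
      Relation.ReflTransGen (Step k m b.length) (1, false, x) (i, false, z) →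
      Relation.ReflTransGen (Step k m b.length) (i, false, z) (j, false, w) →
      z.box ≠ w.box → z.box.1 ≠ w.box.1) ∧
    (∀ (i j : ℕ) (z w : PState),
      Relation.ReflTransGen (Step k m b.length) (1, false, x) (i, true, z) →
      Relation.ReflTransGen (Step k m b.length) (i, true, z) (j, true, w) →
      z.box ≠ w.box → z.box.2 ≠ w.box.2) := by
  have hreach := fun st (h : Relation.ReflTransGen (Step k m b.length) (1, false, x) st) =>
    (stepInv_start hx).reflTransGen h
  refine ⟨fun i z w hz h => (hreach _ hz).row_lt_and_col_le_of_phase1_step h, fun i z w hz h => ?_,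
    fun i j z w hz h hne => ?_, fun i j z w hz h hne => ?_⟩
  · cases h with
    | p2 _ _ hq => exact hq.row_le_and_col_lt (hreach _ hz).2.1 (hreach _ hz).2.2 (hreach _ hz).1
  · exact (((hreach _ hz).box_row_lt_of_phase1 h rfl).resolve_left hne).ne
  · exact (((hreach _ hz).box_col_lt_of_phase2 h rfl).resolve_left hne).ne

/-- Each Phase 1 move takes `⊠` strictly down and weakly
left, and the Phase 1 squares form a vertical strip; each Phase 2 move takes
`⊠` weakly up and strictly right, and the Phase 2 squares form a horizontal
strip. -/
theorem stmt_5 (k m : ℕ) (hk : 0 < k) (hm : 0 < m) (a b g : Partition k m)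
    (hsz : a.size + b.size + g.size = k * m - 1)
    (x : PState) (hx : MemLR1 k m a b g x) :
    (∀ (i : ℕ) (z w : PState),
      Relation.ReflTransGen (Step k m b.length) (1, false, x) (i, false, z) →
      Step k m b.length (i, false, z) (i + 1, false, w) →
      z.box.1 < w.box.1 ∧ w.box.2 ≤ z.box.2) ∧
    (∀ (i : ℕ) (z w : PState),
      Relation.ReflTransGen (Step k m b.length) (1, false, x) (i, true, z) →
      Step k m b.length (i, true, z) (i, true, w) →
      w.box.1 ≤ z.box.1 ∧ z.box.2 < w.box.2) ∧
    (∀ (i j : ℕ) (z w : PState),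
      Relation.ReflTransGen (Step k m b.length) (1, false, x) (i, false, z) →
      Relation.ReflTransGen (Step k m b.length) (i, false, z) (j, false, w) →
      z.box ≠ w.box → z.box.1 ≠ w.box.1) ∧
    (∀ (i j : ℕ) (z w : PState),
      Relation.ReflTransGen (Step k m b.length) (1, false, x) (i, true, z) →
      Relation.ReflTransGen (Step k m b.length) (i, true, z) (j, true, w) →
      z.box ≠ w.box → z.box.2 ≠ w.box.2) :=
  stmt_5_general k m a b g x hx

end SC
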